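/- Implicit Loss Embedding for the FNGW loss: fix integers m, m_max, S, T ≥ 1, finite sets 𝓕 ⊂ ℝ^S and 𝓣 ⊂ ℝ^T, and trade-off parameters (α, β) ∈ [0,1]² with α + β ≤ 1. Let 𝒢 be the (finite) set of graphs g = (F, A, E, p) with m_g ≤ m_max nodes, A ∈ {0,1}^{m_g×m_g}, node features F = (F_i)_{i=1}^{m_g} ∈ 𝓕^{m_g}, edge features E = (E_{ij}) ∈ 𝓣^{m_g×m_g}, and uniform histogram p = m_g^{−1} 𝟙_{m_g}. Let 𝒢_m be the compact set of relaxed graphs (F, A, E, p) with A ∈ [0,1]^{m×m}, F ∈ Conv(𝓕)^m, E ∈ Conv(𝓣)^{m×m}, and p = m^{−1} 𝟙_m. Then the loss FNGW_{α,β} : 𝒢_m × 𝒢 → ℝ admits an Implicit Loss Embedding: there exist a separable Hilbert space H and measurable bounded maps ψ : 𝒢_m → H and φ : 𝒢 → H such that FNGW_{α,β}(z, y) = ⟨ψ(z), φ(y)⟩_H for all z ∈ 𝒢_m, y ∈ 𝒢, and ‖φ(y)‖_H ≤ 1 for all y ∈ 𝒢. -/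

import Mathlib

/-! Since the output space `𝒢` is finite, one can take `H = ℝ^𝒢`, `φ y = e_y` and
`ψ z = (FNGW(z, y))_{y ∈ 𝒢}`. Measurability and boundedness of `ψ` come from continuity:
`FNGW(·, y)` is an infimum, over the compact transport polytope, of a cost jointly continuous in
the relaxed graph and the coupling, and `𝒢_m` is compact. -/

open MeasureTheory

/-- A labeled graph of the finite output space `𝒢`: at most `mmax` nodes (and at least one),
a `{0,1}`-adjacency matrix, node features in the finite set `FS ⊂ ℝ^S`, edge features in the
finite set `TS ⊂ ℝ^T`, and (implicitly) the uniform histogram on its nodes. -/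
structure DiscGraph (S T mmax : ℕ) (FS : Set (Fin S → ℝ)) (TS : Set (Fin T → ℝ)) where
  sz : ℕ
  sz_pos : 1 ≤ sz
  sz_le : sz ≤ mmax
  F : Fin sz → Fin S → ℝ
  A : Fin sz → Fin sz → ℝ
  E : Fin sz → Fin sz → Fin T → ℝ
  hF : ∀ i, F i ∈ FS
  hA : ∀ i j, A i j = 0 ∨ A i j = 1
  hE : ∀ i j, E i j ∈ TS

/-- The compact set `𝒢_m` of relaxed graphs on `m` nodes: `A ∈ [0,1]^{m×m}`,
`F ∈ Conv(FS)^m`, `E ∈ Conv(TS)^{m×m}` (with the uniform histogram `p = 𝟙_m / m`). -/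
def RelGraphSet (S T m : ℕ) (FS : Set (Fin S → ℝ)) (TS : Set (Fin T → ℝ)) :
    Set ((Fin m → Fin S → ℝ) × (Fin m → Fin m → ℝ) × (Fin m → Fin m → Fin T → ℝ)) :=
  {z | (∀ i, z.1 i ∈ convexHull ℝ FS) ∧ (∀ i j, z.2.1 i j ∈ Set.Icc (0 : ℝ) 1)
    ∧ (∀ i j, z.2.2 i j ∈ convexHull ℝ TS)}

/-- The discrete FNGW loss (`q = 2`, `p = 1`, squared Euclidean ground distances) between a
relaxed graph `z ∈ 𝒢_m` (uniform histogram `𝟙_m / m`) and a graph `y ∈ 𝒢` (uniform histogram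
`𝟙_{m_y} / m_y`), as the infimum of the quadratic cost over couplings. -/
noncomputable def fngwLoss {S T m mmax : ℕ} {FS : Set (Fin S → ℝ)} {TS : Set (Fin T → ℝ)}
    (α β : ℝ) (z : RelGraphSet S T m FS TS) (y : DiscGraph S T mmax FS TS) : ℝ :=
  sInf {c : ℝ | ∃ π : Fin m → Fin y.sz → ℝ,
    (∀ k l, 0 ≤ π k l) ∧ (∀ k, ∑ l, π k l = 1 / (m : ℝ))
      ∧ (∀ l, ∑ k, π k l = 1 / (y.sz : ℝ))
      ∧ c = ∑ i, ∑ j, ∑ k, ∑ l,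
          (α * (∑ t, (z.1.2.2 i k t - y.E j l t) ^ 2)
            + β * (z.1.2.1 i k - y.A j l) ^ 2
            + (1 - α - β) * (∑ s, (z.1.1 i s - y.F j s) ^ 2)) * π k l * π i j}

section TransportPolytope

variable {ι κ : Type*} [Fintype ι] [Fintype κ]

def transportPolytope (a : ι → ℝ) (b : κ → ℝ) : Set (ι → κ → ℝ) :=
  {π | (∀ k l, 0 ≤ π k l) ∧ (∀ k, ∑ l, π k l = a k) ∧ (∀ l, ∑ k, π k l = b l)}

theorem isClosed_transportPolytope (a : ι → ℝ) (b : κ → ℝ) :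
    IsClosed (transportPolytope a b) := by
  simp only [transportPolytope, Set.ofPred_and, Set.ofPred_forall]
  refine .inter (isClosed_iInter fun k => isClosed_iInter fun l => isClosed_le (by fun_prop)
    (by fun_prop)) (.inter (isClosed_iInter fun k => isClosed_eq (by fun_prop) (by fun_prop))
    (isClosed_iInter fun l => isClosed_eq (by fun_prop) (by fun_prop)))

theorem transportPolytope_subset_pi_Icc (a : ι → ℝ) (b : κ → ℝ) :
    transportPolytope a b ⊆ Set.univ.pi fun k => Set.univ.pi fun _ => Set.Icc 0 (a k) := by
  rintro π ⟨hπ, hrow, -⟩ k - l -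
  exact ⟨hπ k l, hrow k ▸ Finset.single_le_sum (fun l _ => hπ k l) (Finset.mem_univ l)⟩

theorem isCompact_transportPolytope (a : ι → ℝ) (b : κ → ℝ) :
    IsCompact (transportPolytope a b) :=
  (isCompact_univ_pi fun _ => isCompact_univ_pi fun _ => isCompact_Icc).of_isClosed_subset
    (isClosed_transportPolytope a b) (transportPolytope_subset_pi_Icc a b)

end TransportPolytope

section FNGW

variable {S T m mmax : ℕ} {FS : Set (Fin S → ℝ)} {TS : Set (Fin T → ℝ)}

noncomputable def fngwCost (α β : ℝ)
    (z : (Fin m → Fin S → ℝ) × (Fin m → Fin m → ℝ) × (Fin m → Fin m → Fin T → ℝ))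
    (y : DiscGraph S T mmax FS TS) (π : Fin m → Fin y.sz → ℝ) : ℝ :=
  ∑ i, ∑ j, ∑ k, ∑ l,
    (α * (∑ t, (z.2.2 i k t - y.E j l t) ^ 2)
      + β * (z.2.1 i k - y.A j l) ^ 2
      + (1 - α - β) * (∑ s, (z.1 i s - y.F j s) ^ 2)) * π k l * π i j

theorem fngwLoss_eq_sInf_image_fngwCost (α β : ℝ) (z : RelGraphSet S T m FS TS)
    (y : DiscGraph S T mmax FS TS) :
    fngwLoss α β z y = sInf (fngwCost α β z.1 y ''
      transportPolytope (fun _ => 1 / (m : ℝ)) (fun _ => 1 / (y.sz : ℝ))) := by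
  unfold fngwLoss
  congr 1
  ext c
  constructor
  · rintro ⟨π, h0, hrow, hcol, rfl⟩
    exact ⟨π, ⟨h0, hrow, hcol⟩, rfl⟩
  · rintro ⟨π, ⟨h0, hrow, hcol⟩, rfl⟩
    exact ⟨π, h0, hrow, hcol, rfl⟩

theorem continuous_fngwLoss_left (α β : ℝ) (y : DiscGraph S T mmax FS TS) :
    Continuous fun z : RelGraphSet S T m FS TS => fngwLoss α β z y := by
  simp only [fngwLoss_eq_sInf_image_fngwCost]
  refine (isCompact_transportPolytope _ _).continuous_sInf
    (f := fun z : RelGraphSet S T m FS TS => fngwCost α β z.1 y) ?_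
  unfold fngwCost
  fun_prop

theorem relGraphSet_eq_prod :
    RelGraphSet S T m FS TS =
      (Set.univ.pi fun _ => convexHull ℝ FS) ×ˢ
        (Set.univ.pi fun _ => Set.univ.pi fun _ => Set.Icc 0 1) ×ˢ
          (Set.univ.pi fun _ => Set.univ.pi fun _ => convexHull ℝ TS) := by
  ext z
  simp only [RelGraphSet, Set.mem_prod, Set.mem_pi, Set.mem_univ, true_implies, Set.mem_ofPred_eq]

theorem isCompact_relGraphSet (hFS : FS.Finite) (hTS : TS.Finite) :
    IsCompact (RelGraphSet S T m FS TS) := by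
  rw [relGraphSet_eq_prod]
  exact (isCompact_univ_pi fun _ => hFS.isCompact_convexHull ℝ).prod
    ((isCompact_univ_pi fun _ => isCompact_univ_pi fun _ => isCompact_Icc).prod
      (isCompact_univ_pi fun _ => isCompact_univ_pi fun _ => hTS.isCompact_convexHull ℝ))

end FNGW

theorem finite_discGraph {S T mmax : ℕ} {FS : Set (Fin S → ℝ)} {TS : Set (Fin T → ℝ)}
    (hFS : FS.Finite) (hTS : TS.Finite) : Finite (DiscGraph S T mmax FS TS) := by
  have := hFS.to_subtype
  have := hTS.to_subtype
  let encode (y : DiscGraph S T mmax FS TS) :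
      Σ n : Fin (mmax + 1), (Fin n → FS) × (Fin n → Fin n → ({0, 1} : Set ℝ)) ×
        (Fin n → Fin n → TS) :=
    ⟨⟨y.sz, Nat.lt_succ_of_le y.sz_le⟩, fun i => ⟨y.F i, y.hF i⟩,
      fun i j => ⟨y.A i j, y.hA i j⟩, fun i j => ⟨y.E i j, y.hE i j⟩⟩
  refine Finite.of_injective encode ?_
  rintro ⟨n, _, _, F, A, E, _, _, _⟩ ⟨n', _, _, F', A', E', _, _, _⟩ h
  simp only [encode, Sigma.mk.injEq, Fin.mk.injEq] at h
  obtain ⟨rfl, h⟩ := h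
  simp only [heq_eq_eq, Prod.mk.injEq, funext_iff, Subtype.ext_iff] at h
  obtain ⟨hF, hA, hE⟩ := h
  obtain rfl : F = F' := funext₂ hF
  obtain rfl : A = A' := funext₂ hA
  obtain rfl : E = E' := funext₂ fun i j => funext (hE i j)
  rfl

theorem exists_continuous_euclidean_loss_embedding {X Y : Type*} [TopologicalSpace X]
    [Finite Y] (L : X → Y → ℝ) (hL : ∀ y, Continuous fun x => L x y) :
    ∃ (n : ℕ) (ψ : X → EuclideanSpace ℝ (Fin n)) (φ : Y → EuclideanSpace ℝ (Fin n)),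
      Continuous ψ ∧ (∀ x y, L x y = inner ℝ (ψ x) (φ y)) ∧ ∀ y, ‖φ y‖ = 1 := by
  obtain ⟨n, ⟨e⟩⟩ := Finite.exists_equiv_fin Y
  refine ⟨n, fun x => WithLp.toLp 2 fun k => L x (e.symm k),
    fun y => EuclideanSpace.single (e y) 1, ?_, fun x y => ?_, fun y => ?_⟩
  · exact (PiLp.continuous_toLp 2 _).comp (continuous_pi fun k => hL (e.symm k))
  · simp [EuclideanSpace.inner_single_right]
  · simp

theorem fngw_admits_ILE_general
    (S T m mmax : ℕ)
    (FS : Set (Fin S → ℝ)) (TS : Set (Fin T → ℝ))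
    (hFSfin : FS.Finite) (hTSfin : TS.Finite)
    (α β : ℝ) :
    ∃ (H : Type) (iN : NormedAddCommGroup H),
      letI := iN
      ∃ (iI : InnerProductSpace ℝ H),
        letI := iI
        letI : MeasurableSpace H := borel H
        CompleteSpace H ∧ TopologicalSpace.SeparableSpace H ∧
        ∃ (ψ : RelGraphSet S T m FS TS → H) (φ : DiscGraph S T mmax FS TS → H),
          Measurable ψ
          ∧ Measurable[⊤] φ
          ∧ Bornology.IsBounded (Set.range ψ)
          ∧ Bornology.IsBounded (Set.range φ)
          ∧ (∀ z y, fngwLoss α β z y = (inner ℝ (ψ z) (φ y) : ℝ))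
          ∧ (∀ y, ‖φ y‖ ≤ 1) := by
  have := finite_discGraph (mmax := mmax) hFSfin hTSfin
  have := isCompact_iff_compactSpace.mp (isCompact_relGraphSet (m := m) hFSfin hTSfin)
  obtain ⟨n, ψ, φ, hψ, hloss, hφ⟩ := exists_continuous_euclidean_loss_embedding
    (fun (z : RelGraphSet S T m FS TS) (y : DiscGraph S T mmax FS TS) => fngwLoss α β z y)
    (continuous_fngwLoss_left α β)
  let _ : MeasurableSpace (EuclideanSpace ℝ (Fin n)) := borel _
  have : BorelSpace (EuclideanSpace ℝ (Fin n)) := ⟨rfl⟩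
  refine ⟨EuclideanSpace ℝ (Fin n), _, _, inferInstance, inferInstance, ψ, φ, hψ.measurable,
    fun _ _ => trivial, (isCompact_range hψ).isBounded, ?_, hloss, fun y => (hφ y).le⟩
  exact isBounded_iff_forall_norm_le.mpr ⟨1, Set.forall_mem_range.mpr fun y => (hφ y).le⟩

/-- **Implicit Loss Embedding for the FNGW loss**: there are a separable Hilbert space `H` and
measurable bounded maps `ψ : 𝒢_m → H`, `φ : 𝒢 → H` with
`FNGW_{α,β}(z, y) = ⟨ψ z, φ y⟩_H` and `‖φ y‖ ≤ 1`. -/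
theorem fngw_admits_ILE
    (S T m mmax : ℕ) (hS : 1 ≤ S) (hT : 1 ≤ T) (hm : 1 ≤ m) (hmmax : 1 ≤ mmax)
    (FS : Set (Fin S → ℝ)) (TS : Set (Fin T → ℝ))
    (hFSfin : FS.Finite) (hTSfin : TS.Finite)
    (hFSne : FS.Nonempty) (hTSne : TS.Nonempty)
    (α β : ℝ) (hα : α ∈ Set.Icc (0 : ℝ) 1) (hβ : β ∈ Set.Icc (0 : ℝ) 1) (hαβ : α + β ≤ 1) :
    ∃ (H : Type) (iN : NormedAddCommGroup H),
      letI := iN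
      ∃ (iI : InnerProductSpace ℝ H),
        letI := iI
        letI : MeasurableSpace H := borel H
        CompleteSpace H ∧ TopologicalSpace.SeparableSpace H ∧
        ∃ (ψ : RelGraphSet S T m FS TS → H) (φ : DiscGraph S T mmax FS TS → H),
          Measurable ψ
          ∧ Measurable[⊤] φ
          ∧ Bornology.IsBounded (Set.range ψ)
          ∧ Bornology.IsBounded (Set.range φ)
          ∧ (∀ z y, fngwLoss α β z y = (inner ℝ (ψ z) (φ y) : ℝ))
          ∧ (∀ y, ‖φ y‖ ≤ 1) :=
  fngw_admits_ILE_general S T m mmax FS TS hFSfin hTSfin α β
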